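/- Let p(x) = ½N(x; μ, τ²I) + ½N(x; −μ, τ²I) be an equal-weight two-component Gaussian mixture on ℝ^d and let Y = X + N with N ~ N(0, σ²I) independent of X. Then ∇² log p_Y(y) = (σ²+τ²)^{−1}[−I + (2μμ^⊤/(σ²+τ²))·(1 + cosh(2μ^⊤y/(σ²+τ²)))^{−1}], and this matrix is maximized (in Loewner order over y) at y = 0. -/

import Mathlib

open MeasureTheory Real

noncomputable section

def sqDist {d : ℕ} (x y : Fin d → ℝ) : ℝ := ∑ i, (x i - y i) ^ 2

/-- Density of the isotropic Gaussian `N(x, s² I)` evaluated at `y`. -/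
def gKer (d : ℕ) (s : ℝ) (x y : Fin d → ℝ) : ℝ :=
  (2 * π * s ^ 2) ^ (-(d : ℝ) / 2) * Real.exp (-sqDist x y / (2 * s ^ 2))

def hess' {d : ℕ} (g : (Fin d → ℝ) → ℝ) (y : Fin d → ℝ) : Matrix (Fin d) (Fin d) ℝ :=
  Matrix.of fun i j => fderiv ℝ (fun z => fderiv ℝ g z (Pi.single j 1)) y (Pi.single i 1)

/-- The equal-weight two-component Gaussian mixture `½N(μ, τ²I) + ½N(−μ, τ²I)`. -/
def mixPDF {d : ℕ} (μ : Fin d → ℝ) (τ : ℝ) (x : Fin d → ℝ) : ℝ :=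
  (1 / 2) * gKer d τ μ x + (1 / 2) * gKer d τ (-μ) x

/-!
Each component of the smoothed mixture is again Gaussian: completing the square, the prior
density `N(x; ±μ, τ²)` times the likelihood `N(y; x, σ²)` is the evidence `N(y; ±μ, σ² + τ²)`
times a normalised posterior density in `x`. With `s = σ² + τ²` this gives
`log p_Y(y) = c - |y|²/(2s) + log cosh(μᵀy/s)`, whose Hessian is
`-I/s + sech²(μᵀy/s) μμᵀ/s²`, and `sech² t = 2/(1 + cosh 2t)`. Only the nonnegative multiple of
`μμᵀ` depends on `y`, and its coefficient is largest where `cosh` is smallest, at `y = 0`.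
-/

open ProbabilityTheory NNReal Matrix

lemma gaussianPDFReal_mul_gaussianPDFReal {v w : ℝ≥0} (hv : v ≠ 0) (hw : w ≠ 0) (a x z : ℝ) :
    gaussianPDFReal a v x * gaussianPDFReal x w z =
      gaussianPDFReal a (v + w) z *
        gaussianPDFReal ((w * a + v * z) / (v + w)) (v * w / (v + w)) x := by
  have hv' : (0 : ℝ) < v := by positivity
  have hw' : (0 : ℝ) < w := by positivity
  simp only [gaussianPDFReal, NNReal.coe_add, NNReal.coe_mul, NNReal.coe_div]
  have hconst : √(2 * π * v) * √(2 * π * w) =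
      √(2 * π * (v + w)) * √(2 * π * (v * w / (v + w))) := by
    rw [← Real.sqrt_mul (by positivity), ← Real.sqrt_mul (by positivity)]
    congr 1
    field_simp
  have hexp : -(x - a) ^ 2 / (2 * v) + -(z - x) ^ 2 / (2 * w) =
      -(z - a) ^ 2 / (2 * (v + w)) +
        -(x - (w * a + v * z) / (v + w)) ^ 2 / (2 * (v * w / (v + w))) := by
    field_simp
    ring
  calc _ = (√(2 * π * v) * √(2 * π * w))⁻¹ *
        rexp (-(x - a) ^ 2 / (2 * v) + -(z - x) ^ 2 / (2 * w)) := by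
        rw [mul_inv, Real.exp_add]; ring
    _ = _ := by rw [hconst, hexp, mul_inv, Real.exp_add]; ring

lemma integral_gaussianPDFReal_mul_gaussianPDFReal {v w : ℝ≥0} (hv : v ≠ 0) (hw : w ≠ 0)
    (a z : ℝ) :
    ∫ x, gaussianPDFReal a v x * gaussianPDFReal x w z = gaussianPDFReal a (v + w) z := by
  simp_rw [gaussianPDFReal_mul_gaussianPDFReal hv hw, integral_const_mul]
  rw [integral_gaussianPDFReal_eq_one _ (by positivity), mul_one]

lemma integrable_gaussianPDFReal_mul_gaussianPDFReal {v w : ℝ≥0} (hv : v ≠ 0) (hw : w ≠ 0)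
    (a z : ℝ) : Integrable fun x => gaussianPDFReal a v x * gaussianPDFReal x w z := by
  simp_rw [gaussianPDFReal_mul_gaussianPDFReal hv hw]
  exact (integrable_gaussianPDFReal _ _).const_mul _

lemma Real.hasDerivAt_tanh (t : ℝ) : HasDerivAt tanh (cosh t ^ 2)⁻¹ t := by
  have h := (Real.hasDerivAt_sinh t).div (Real.hasDerivAt_cosh t) (Real.cosh_pos t).ne'
  rw [show tanh = sinh / cosh from funext tanh_eq_sinh_div_cosh]
  refine h.congr_deriv ?_
  rw [← sq, ← sq, cosh_sq_sub_sinh_sq, one_div]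

lemma hasDerivAt_log_cosh_div (s t : ℝ) :
    HasDerivAt (fun t => log (cosh (t / s))) (tanh (t / s) / s) t := by
  have h : HasDerivAt (fun t => cosh (t / s)) (sinh (t / s) * (1 / s)) t :=
    (hasDerivAt_cosh _).comp t ((hasDerivAt_id t).div_const s)
  refine (h.log (cosh_pos _).ne').congr_deriv ?_
  rw [tanh_eq_sinh_div_cosh]
  ring

lemma hasDerivAt_tanh_div_div (s t : ℝ) :
    HasDerivAt (fun t => tanh (t / s) / s) ((s ^ 2 * cosh (t / s) ^ 2)⁻¹) t := by
  have h : HasDerivAt (fun t => tanh (t / s)) ((cosh (t / s) ^ 2)⁻¹ * (1 / s)) t :=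
    (Real.hasDerivAt_tanh _).comp t ((hasDerivAt_id t).div_const s)
  refine (h.div_const s).congr_deriv ?_
  ring

lemma one_add_cosh_two_mul (x : ℝ) : 1 + cosh (2 * x) = 2 * cosh x ^ 2 := by
  rw [cosh_two_mul, cosh_sq]
  ring

section DotProduct

variable {ι : Type*} [Fintype ι]

def dotProductCLM (μ : ι → ℝ) : (ι → ℝ) →L[ℝ] ℝ :=
  ∑ i, μ i • ContinuousLinearMap.proj i

@[simp]
lemma dotProductCLM_apply (μ v : ι → ℝ) : dotProductCLM μ v = μ ⬝ᵥ v := by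
  simp [dotProductCLM, dotProduct]

lemma hasFDerivAt_dotProduct (μ z : ι → ℝ) : HasFDerivAt (μ ⬝ᵥ ·) (dotProductCLM μ) z := by
  convert (dotProductCLM μ).hasFDerivAt using 1
  ext v
  simp

lemma hasFDerivAt_dotProduct_self (z : ι → ℝ) :
    HasFDerivAt (fun z => z ⬝ᵥ z) (2 • dotProductCLM z) z := by
  have h := HasFDerivAt.fun_sum (𝕜 := ℝ) (u := Finset.univ) (A := fun i (z : ι → ℝ) => z i * z i)
    fun i _ => (hasFDerivAt_apply i z).fun_mul (hasFDerivAt_apply i z)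
  refine h.congr_fderiv ?_
  ext v
  simp [dotProduct, Finset.sum_add_distrib, two_mul]

end DotProduct

lemma posSemidef_smul_add_smul_sub_of_le {n : Type*} [Fintype n] {M : Matrix n n ℝ}
    (hM : M.PosSemidef) (N : Matrix n n ℝ) {c a b : ℝ} (hc : 0 ≤ c) (hab : a ≤ b) :
    (c • (N + b • M) - c • (N + a • M)).PosSemidef := by
  rw [show c • (N + b • M) - c • (N + a • M) = (c * (b - a)) • M by module]
  exact hM.smul (mul_nonneg hc (sub_nonneg.2 hab))

section GaussianSmoothing

variable {d : ℕ} {σ τ ρ : ℝ}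

lemma gKer_eq_prod_gaussianPDFReal (s : ℝ) (x y : Fin d → ℝ) :
    gKer d s x y = ∏ i, gaussianPDFReal (x i) (s ^ 2).toNNReal (y i) := by
  have hc : 0 ≤ 2 * π * s ^ 2 := by positivity
  rw [gKer, sqDist, show -(d : ℝ) / 2 = -(1 / 2) * d by ring, Real.rpow_mul hc,
    Real.rpow_neg hc, ← Real.sqrt_eq_rpow, Real.rpow_natCast, neg_div,
    Finset.sum_div, ← Finset.sum_neg_distrib, Real.exp_sum, ← Fin.prod_const,
    ← Finset.prod_mul_distrib]
  simp only [gaussianPDFReal, Real.coe_toNNReal _ (sq_nonneg s), sub_sq_comm (x _), neg_div]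

lemma integrable_gKer_mul_gKer (hσ : σ ≠ 0) (hτ : τ ≠ 0) (a z : Fin d → ℝ) :
    Integrable fun x => gKer d τ a x * gKer d σ x z := by
  simp_rw [gKer_eq_prod_gaussianPDFReal, ← Finset.prod_mul_distrib]
  exact Integrable.fintype_prod (f := fun i x => _ * gaussianPDFReal x _ (z i))
    fun i => integrable_gaussianPDFReal_mul_gaussianPDFReal (by positivity) (by positivity) _ _

lemma integral_gKer_mul_gKer (hσ : σ ≠ 0) (hτ : τ ≠ 0) (hρ : ρ ^ 2 = σ ^ 2 + τ ^ 2)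
    (a z : Fin d → ℝ) : ∫ x, gKer d τ a x * gKer d σ x z = gKer d ρ a z := by
  simp_rw [gKer_eq_prod_gaussianPDFReal, ← Finset.prod_mul_distrib]
  rw [integral_fintype_prod_volume_eq_prod (fun i x => _ * gaussianPDFReal x _ (z i))]
  refine Finset.prod_congr rfl fun i _ => ?_
  rw [integral_gaussianPDFReal_mul_gaussianPDFReal (by positivity) (by positivity),
    ← Real.toNNReal_add (sq_nonneg τ) (sq_nonneg σ), hρ, add_comm]

lemma integral_mixPDF_mul_gKer (hσ : σ ≠ 0) (hτ : τ ≠ 0) (hρ : ρ ^ 2 = σ ^ 2 + τ ^ 2)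
    (μ z : Fin d → ℝ) :
    ∫ x, mixPDF μ τ x * gKer d σ x z = 1 / 2 * gKer d ρ μ z + 1 / 2 * gKer d ρ (-μ) z := by
  simp_rw [mixPDF, add_mul, mul_assoc]
  rw [integral_add ((integrable_gKer_mul_gKer hσ hτ μ z).const_mul _)
    ((integrable_gKer_mul_gKer hσ hτ (-μ) z).const_mul _), integral_const_mul,
    integral_const_mul, integral_gKer_mul_gKer hσ hτ hρ, integral_gKer_mul_gKer hσ hτ hρ]

lemma sqDist_eq_dotProduct (μ z : Fin d → ℝ) : sqDist μ z = μ ⬝ᵥ μ - 2 * μ ⬝ᵥ z + z ⬝ᵥ z := by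
  simp only [sqDist, dotProduct, Finset.mul_sum, ← Finset.sum_sub_distrib,
    ← Finset.sum_add_distrib]
  exact Finset.sum_congr rfl fun i _ => by ring

lemma half_gKer_add_half_gKer_neg (μ z : Fin d → ℝ) :
    1 / 2 * gKer d ρ μ z + 1 / 2 * gKer d ρ (-μ) z =
      (2 * π * ρ ^ 2) ^ (-(d : ℝ) / 2) * rexp (-(μ ⬝ᵥ μ + z ⬝ᵥ z) / (2 * ρ ^ 2)) *
        cosh (μ ⬝ᵥ z / ρ ^ 2) := by
  simp only [gKer, sqDist_eq_dotProduct, neg_dotProduct, dotProduct_neg, neg_neg, Real.cosh_eq]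
  have hexp (t : ℝ) : -(μ ⬝ᵥ μ - 2 * t + z ⬝ᵥ z) / (2 * ρ ^ 2) =
      -(μ ⬝ᵥ μ + z ⬝ᵥ z) / (2 * ρ ^ 2) + t / ρ ^ 2 := by ring
  rw [hexp, hexp, Real.exp_add, Real.exp_add, neg_div _ (μ ⬝ᵥ z)]
  ring

lemma log_half_gKer_add_half_gKer_neg (hρ : ρ ≠ 0) (μ z : Fin d → ℝ) :
    log (1 / 2 * gKer d ρ μ z + 1 / 2 * gKer d ρ (-μ) z) =
      (log ((2 * π * ρ ^ 2) ^ (-(d : ℝ) / 2)) - μ ⬝ᵥ μ / (2 * ρ ^ 2)) -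
        (2 * ρ ^ 2)⁻¹ * z ⬝ᵥ z + log (cosh (μ ⬝ᵥ z / ρ ^ 2)) := by
  rw [half_gKer_add_half_gKer_neg, log_mul (by positivity) (cosh_pos _).ne',
    log_mul (by positivity) (exp_pos _).ne', log_exp]
  ring

lemma hess'_eq_of_hasFDerivAt {g : (Fin d → ℝ) → ℝ}
    {g' : (Fin d → ℝ) → (Fin d → ℝ) →L[ℝ] ℝ} (hg : ∀ z, HasFDerivAt g (g' z) z)
    {y : Fin d → ℝ} {H : Fin d → (Fin d → ℝ) →L[ℝ] ℝ}
    (hH : ∀ j, HasFDerivAt (fun z => g' z (Pi.single j 1)) (H j) y) :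
    hess' g y = of fun i j => H j (Pi.single i 1) := by
  ext i j
  simp only [hess', of_apply, fun z => (hg z).fderiv, (hH j).fderiv]

lemma hess'_const_sub_mul_dotProduct_self_add_comp_dotProduct {φ φ' : ℝ → ℝ}
    (hφ : ∀ t, HasDerivAt φ (φ' t) t) (c a : ℝ) (μ y : Fin d → ℝ) {b : ℝ}
    (hφ' : HasDerivAt φ' b (μ ⬝ᵥ y)) :
    hess' (fun z => c - a * z ⬝ᵥ z + φ (μ ⬝ᵥ z)) y = (-(2 * a)) • 1 + b • vecMulVec μ μ := by
  have hg (z : Fin d → ℝ) : HasFDerivAt (fun z => c - a * z ⬝ᵥ z + φ (μ ⬝ᵥ z)) _ z :=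
    (((hasFDerivAt_dotProduct_self z).const_mul a).const_sub c).fun_add
      ((hφ _).comp_hasFDerivAt z (hasFDerivAt_dotProduct μ z))
  have hH (j : Fin d) := (((hasFDerivAt_apply j y).const_mul (2 * a)).fun_neg).fun_add
    ((hφ'.comp_hasFDerivAt y (hasFDerivAt_dotProduct μ y)).mul_const (μ j))
  rw [hess'_eq_of_hasFDerivAt hg fun j =>
    (hH j).congr_of_eventuallyEq (.of_forall fun z => by
      simp only [_root_.add_apply, _root_.neg_apply, _root_.smul_apply, dotProductCLM_apply,
        dotProduct_single, mul_one, nsmul_eq_mul, Nat.cast_ofNat, smul_eq_mul,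
        Function.comp_apply]
      ring)]
  ext i j
  simp only [_root_.add_apply, _root_.neg_apply, _root_.smul_apply, ContinuousLinearMap.proj_apply,
    Pi.single_apply, smul_eq_mul, mul_ite, mul_one, mul_zero, dotProductCLM_apply,
    dotProduct_single, of_apply, neg_smul, Matrix.add_apply, Matrix.neg_apply, Matrix.smul_apply,
    one_apply, eq_comm (a := i), vecMulVec_apply]
  ring

lemma hess'_log_integral_mixPDF_mul_gKer (hσ : σ ≠ 0) (hτ : τ ≠ 0) (μ y : Fin d → ℝ) :
    hess' (fun z => log (∫ x, mixPDF μ τ x * gKer d σ x z)) y =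
      (σ ^ 2 + τ ^ 2)⁻¹ • (-1 + ((2 / (σ ^ 2 + τ ^ 2)) *
        (1 + cosh (2 * (μ ⬝ᵥ y) / (σ ^ 2 + τ ^ 2)))⁻¹) • vecMulVec μ μ) := by
  have hs : 0 < σ ^ 2 + τ ^ 2 := by positivity
  have hρ : √(σ ^ 2 + τ ^ 2) ^ 2 = σ ^ 2 + τ ^ 2 := sq_sqrt hs.le
  have hlog : (fun z => log (∫ x, mixPDF μ τ x * gKer d σ x z)) = fun z =>
      (log ((2 * π * (σ ^ 2 + τ ^ 2)) ^ (-(d : ℝ) / 2)) - μ ⬝ᵥ μ / (2 * (σ ^ 2 + τ ^ 2))) -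
        (2 * (σ ^ 2 + τ ^ 2))⁻¹ * z ⬝ᵥ z + log (cosh (μ ⬝ᵥ z / (σ ^ 2 + τ ^ 2))) := by
    funext z
    rw [integral_mixPDF_mul_gKer hσ hτ hρ, log_half_gKer_add_half_gKer_neg (by positivity), hρ]
  rw [hlog, hess'_const_sub_mul_dotProduct_self_add_comp_dotProduct
    (hasDerivAt_log_cosh_div _) _ _ μ y (hasDerivAt_tanh_div_div _ _), mul_div_assoc,
    one_add_cosh_two_mul]
  generalize σ ^ 2 + τ ^ 2 = s
  module

end GaussianSmoothing

/-- For the smoothed two-component mixture,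
`∇² log p_Y(y) = (σ²+τ²)⁻¹[−I + (2μμᵀ/(σ²+τ²))(1 + cosh(2μᵀy/(σ²+τ²)))⁻¹]`,
and in Loewner order this Hessian is maximized over `y` at `y = 0`. -/
theorem stmt15 (d : ℕ) (σ τ : ℝ) (hσ : 0 < σ) (hτ : 0 < τ) (μ : Fin d → ℝ) :
    (∀ y : Fin d → ℝ,
      hess' (fun z => Real.log (∫ x, mixPDF μ τ x * gKer d σ x z)) y
        = (σ ^ 2 + τ ^ 2)⁻¹ •
            (-(1 : Matrix (Fin d) (Fin d) ℝ)
              + ((2 / (σ ^ 2 + τ ^ 2))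
                  * (1 + Real.cosh (2 * (∑ i, μ i * y i) / (σ ^ 2 + τ ^ 2)))⁻¹)
                • Matrix.vecMulVec μ μ))
    ∧ ∀ y : Fin d → ℝ,
      (hess' (fun z => Real.log (∫ x, mixPDF μ τ x * gKer d σ x z)) 0
        - hess' (fun z => Real.log (∫ x, mixPDF μ τ x * gKer d σ x z)) y).PosSemidef := by
  have hess_eq := hess'_log_integral_mixPDF_mul_gKer hσ.ne' hτ.ne' μ
  refine ⟨hess_eq, fun y => ?_⟩
  rw [hess_eq, hess_eq, dotProduct_zero, mul_zero, zero_div]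
  refine posSemidef_smul_add_smul_sub_of_le (by simpa using posSemidef_vecMulVec_self_star μ) _
    (by positivity) ?_
  gcongr
  exact cosh_le_cosh.2 (by simp)

end
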